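/- Let G be a finite group acting on a countably infinite universal G-set U, let S be a finite G-set, and let C be a tame M(U)-category. Let C^{⊠S} denote the full subcategory of the product category C^S spanned by the S-tuples of objects (a_s) whose supports supp(a_s) ⊆ U are pairwise disjoint. Let G act on C^S by sending (a_s)_{s∈S} to ((l^g) • a_{g⁻¹·s})_{s∈S} (and correspondingly on tuples of morphisms via the functors (l^g)_*); this action preserves the subcategory C^{⊠S}. Then the inclusion C^{⊠S} → C^S restricts to an equivalence of categories (C^{⊠S})^G → (C^S)^G between the G-fixed categories. (This is the fixed-point form of the theorem that the Γ-ℳ-category γ(C) associated with a parsummable category is globally special; only the underlying tame ℳ-category is needed.) -/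

import Mathlib

open CategoryTheory

/-- The monoid of injective self-maps of `U`, under composition. -/
def Minj (U : Type*) : Submonoid (Function.End U) where
  carrier := {f | Function.Injective f}
  mul_mem' := fun hf hg => hf.comp hg
  one_mem' := Function.injective_id

instance (U : Type*) : FunLike (Minj U) U U where
  coe u := u.1
  coe_injective := fun _ _ h => Subtype.ext h

@[simp] lemma Minj.mul_apply {U : Type*} (u v : Minj U) (a : U) : (u * v) a = u (v a) := rfl

/-- `x` is supported on `A` if every injection fixing `A` elementwise fixes `x`. -/
def Supported {U : Type*} {X : Type*} [MulAction (Minj U) X] (A : Set U) (x : X) : Prop :=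
  ∀ u : Minj U, (∀ a ∈ A, u a = a) → u • x = x

/-- `x` is finitely supported if it is supported on some finite subset of `U`. -/
def FinSupported {U : Type*} {X : Type*} [MulAction (Minj U) X] (x : X) : Prop :=
  ∃ A : Finset U, Supported (A : Set U) x

/-- The support of `x`: the intersection of all finite subsets of `U` on which `x`
is supported. -/
def supp {U : Type*} {X : Type*} [MulAction (Minj U) X] (x : X) : Set U :=
  {i : U | ∀ A : Finset U, Supported (A : Set U) x → i ∈ A}

/-- An `M(U)`-category: a category with an action of the injection monoid on objects,
together with coherent isomorphisms `ι u x : x ≅ u • x`. The action of `u` on morphisms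
is then given by conjugation with these isomorphisms. -/
structure MCat (U : Type*) (C : Type*) [Category C] [MulAction (Minj U) C] where
  ι : ∀ (u : Minj U) (x : C), x ≅ u • x
  ι_mul : ∀ (u v : Minj U) (x : C),
    (ι u x).hom ≫ (ι v (u • x)).hom = (ι (v * u) x).hom ≫ eqToHom (mul_smul v u x)

namespace MCat

variable {U : Type*} {C : Type*} [Category C] [MulAction (Minj U) C]

/-- The action `u_*` of an injection on morphisms: `u_*(f) = ι(u,y) ∘ f ∘ ι(u,x)⁻¹`. -/
def act (h : MCat U C) (u : Minj U) {x y : C} (f : x ⟶ y) : u • x ⟶ u • y :=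
  (h.ι u x).inv ≫ f ≫ (h.ι u y).hom

/-- The natural isomorphism `[v,u]^x := ι(v,x) ∘ ι(u,x)⁻¹ : u • x ⟶ v • x`. -/
def tw (h : MCat U C) (v u : Minj U) (x : C) : u • x ⟶ v • x :=
  (h.ι u x).inv ≫ (h.ι v x).hom

@[simp] lemma act_id (h : MCat U C) (u : Minj U) (x : C) : h.act u (𝟙 x) = 𝟙 (u • x) := by
  simp [act]

@[simp] lemma act_comp (h : MCat U C) (u : Minj U) {x y z : C} (f : x ⟶ y) (g : y ⟶ z) :
    h.act u (f ≫ g) = h.act u f ≫ h.act u g := by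
  simp [act]

lemma ι_natural (h : MCat U C) (u : Minj U) {x y : C} (f : x ⟶ y) :
    (h.ι u x).hom ≫ h.act u f = f ≫ (h.ι u y).hom := by
  simp [act]

end MCat

/-- A universal `G`-set: a countable `G`-set in which every subgroup of `G` occurs as the
stabilizer of infinitely many elements. -/
def IsUniversalGSet (G : Type*) [Group G] (U : Type*) [MulAction G U] : Prop :=
  Countable U ∧ ∀ H : Subgroup G, {u : U | MulAction.stabilizer G u = H}.Infinite

/-- For `g : G`, the injection `l^g : U → U`, `i ↦ g • i`, as an element of `M(U)`. -/
def lG {G : Type*} [Group G] {U : Type*} [MulAction G U] (g : G) : Minj U :=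
  ⟨fun i => g • i, MulAction.injective g⟩

section

variable (G : Type*) [Group G] (S : Type*) [MulAction G S]
variable (U : Type*) [MulAction G U]
variable (C : Type*) [Category C] [MulAction (Minj U) C]

/-- Objects of the `G`-fixed category `(C^S)^G` of the product category `C^S`, where `G` acts
by `(a_s)_s ↦ ((l^g) • a_{g⁻¹·s})_s`. -/
structure FixedTuple (hC : MCat U C) where
  X : S → C
  fixed : ∀ (g : G) (s : S), lG (U := U) g • X (g⁻¹ • s) = X s

variable {G S U C}

/-- The canonical morphism `X (g⁻¹ • s) ⟶ X s` of a `G`-fixed tuple; a tuple of morphisms is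
`G`-fixed exactly when it commutes with these. -/
def trTuple (hC : MCat U C) (x : FixedTuple G S U C hC) (g : G) (s : S) :
    x.X (g⁻¹ • s) ⟶ x.X s :=
  (hC.ι (lG g) (x.X (g⁻¹ • s))).hom ≫ eqToHom (x.fixed g s)

variable (G S U C)

/-- The `G`-fixed category `(C^S)^G`. -/
instance FixedTuple.category (hC : MCat U C) : Category (FixedTuple G S U C hC) where
  Hom x y := {f : ∀ s : S, x.X s ⟶ y.X s //
    ∀ (g : G) (s : S), f (g⁻¹ • s) ≫ trTuple hC y g s = trTuple hC x g s ≫ f s}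
  id x := ⟨fun s => 𝟙 (x.X s), fun g s => by simp⟩
  comp {x y z} f g := ⟨fun s => f.1 s ≫ g.1 s, fun γ s => by
    rw [Category.assoc, g.2 γ s, ← Category.assoc, f.2 γ s, Category.assoc]⟩
  id_comp f := Subtype.ext (funext fun s => Category.id_comp (f.1 s))
  comp_id f := Subtype.ext (funext fun s => Category.comp_id (f.1 s))
  assoc f g h := Subtype.ext (funext fun s => Category.assoc (f.1 s) (g.1 s) (h.1 s))

end

/-- The predicate singling out `(C^{⊠S})^G` inside `(C^S)^G`: the supports of the components
are pairwise disjoint. -/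
def PairwiseDisjTuple {G S U C : Type*} [Group G] [MulAction G S] [MulAction G U]
    [Category C] [MulAction (Minj U) C] (hC : MCat U C)
    (x : FixedTuple G S U C hC) : Prop :=
  ∀ s t : S, s ≠ t → Disjoint (supp (U := U) (x.X s)) (supp (U := U) (x.X t))

/-! Since `U` is universal, the countable `G`-set `U × S` embeds equivariantly into `U`; the
embedding `φ` yields injections `u_s = φ(-, s)` with pairwise disjoint images satisfying
`l^g u_{g⁻¹s} = u_s l^g`. In a tame `M(U)`-set `supp (u • y) ⊆ range u`, so for a fixed tuple `x`
the tuple `(u_s • x_s)_s` is fixed, has pairwise disjoint supports, and is isomorphic to `x`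
through the isomorphisms `ι(u_s, x_s)`. Hence the fully faithful inclusion is essentially
surjective. -/

open Function Set

lemma Set.Infinite.exists_injective_forall_mem {α β : Type*} [Countable α] {E : Set β}
    (hE : E.Infinite) : ∃ g : α → β, Injective g ∧ ∀ a, g a ∈ E := by
  obtain ⟨c, hc⟩ := Countable.exists_injective_nat α
  exact ⟨fun a => Set.Infinite.natEmbedding E hE (c a),
    Subtype.val_injective.comp ((Set.Infinite.natEmbedding E hE).injective.comp hc),
    fun a => (Set.Infinite.natEmbedding E hE (c a)).2⟩

lemma exists_injective_eqOn_id_mapsTo_compl {α : Type*} [Countable α] {A F : Set α}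
    (hAF : (A ∪ F)ᶜ.Infinite) :
    ∃ w : α → α, Injective w ∧ EqOn w id A ∧ MapsTo w Aᶜ Fᶜ ∧ (range w)ᶜ.Infinite := by
  classical
  have : Infinite α := hAF.to_subtype.of_injective _ Subtype.val_injective
  obtain ⟨g, hg, hgAF⟩ := hAF.exists_injective_forall_mem (α := α ⊕ α)
  have hgA : ∀ k, g k ∉ A := fun k h => hgAF k (Or.inl h)
  refine ⟨A.piecewise id (g ∘ Sum.inl), ?_, A.piecewise_eqOn _ _, fun i (hi : i ∉ A) => ?_, ?_⟩
  · exact A.injective_piecewise_iff.2 ⟨injOn_id A, (hg.comp Sum.inl_injective).injOn,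
      fun i hi j _ h => hgA (.inl j) (Eq.subst (motive := (· ∈ A)) h hi)⟩
  · rw [A.piecewise_eq_of_notMem _ _ hi]
    exact fun h => hgAF _ (Or.inr h)
  · refine (infinite_range_of_injective (hg.comp Sum.inr_injective)).mono ?_
    rintro _ ⟨j, rfl⟩ ⟨i, hi⟩
    by_cases hiA : i ∈ A
    · rw [A.piecewise_eq_of_mem _ _ hiA] at hi
      exact hgA (.inr j) (Eq.subst (motive := (· ∈ A)) hi hiA)
    · rw [A.piecewise_eq_of_notMem _ _ hiA] at hi
      exact Sum.inl_ne_inr (hg hi)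

lemma exists_injective_eqOn_id_comp_eq {α β : Type*} [Countable α] {p q : β → α}
    (hp : Injective p) (hq : Injective q) {B : Set α}
    (hB : ∀ i, p i ∈ B ∨ q i ∈ B → p i = q i) (hinf : (range q ∪ B)ᶜ.Infinite) :
    ∃ t : α → α, Injective t ∧ EqOn t id B ∧ t ∘ p = q := by
  classical
  obtain ⟨g, hg, hgqB⟩ := hinf.exists_injective_forall_mem (α := α)
  have he : Injective (B.piecewise id g) := B.injective_piecewise_iff.2
    ⟨injOn_id B, hg.injOn, fun i hi j _ h => hgqB j (Or.inr (h ▸ hi))⟩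
  have hout : ∀ j ∉ range p,
      extend p q (B.piecewise id g) j = B.piecewise id g j ∧ B.piecewise id g j ∉ range q := by
    refine fun j hj => ⟨extend_apply' _ _ _ (by simpa using hj), ?_⟩
    rintro ⟨i, hi⟩
    by_cases hjB : j ∈ B
    · rw [B.piecewise_eq_of_mem _ _ hjB] at hi
      exact hj ⟨i, (hB i (Or.inr (hi ▸ hjB))).trans hi⟩
    · rw [B.piecewise_eq_of_notMem _ _ hjB] at hi
      exact hgqB j (Or.inl ⟨i, hi⟩)
  refine ⟨extend p q (B.piecewise id g), fun j₁ j₂ h => ?_, fun j hj => ?_, extend_comp hp _ _⟩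
  · by_cases h₁ : j₁ ∈ range p <;> by_cases h₂ : j₂ ∈ range p
    · obtain ⟨⟨i₁, rfl⟩, ⟨i₂, rfl⟩⟩ := And.intro h₁ h₂
      rw [hp.extend_apply, hp.extend_apply] at h
      rw [hq h]
    · obtain ⟨i₁, rfl⟩ := h₁
      rw [hp.extend_apply, (hout j₂ h₂).1] at h
      exact absurd ⟨i₁, h⟩ (hout j₂ h₂).2
    · obtain ⟨i₂, rfl⟩ := h₂
      rw [hp.extend_apply, (hout j₁ h₁).1] at h
      exact absurd ⟨i₂, h.symm⟩ (hout j₁ h₁).2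
    · rw [(hout j₁ h₁).1, (hout j₂ h₂).1] at h
      exact he h
  · by_cases hj' : j ∈ range p
    · obtain ⟨i, rfl⟩ := hj'
      rw [hp.extend_apply]
      exact (hB i (Or.inl hj)).symm
    · rw [(hout j hj').1, B.piecewise_eq_of_mem _ _ hj]

lemma exists_injective_forall_mem_of_forall_infinite {ι α : Type*} [Countable ι]
    {T : ι → Set α} (hT : ∀ i, (T i).Infinite) : ∃ f : ι → α, Injective f ∧ ∀ i, f i ∈ T i := by
  classical
  -- Hall's condition holds for finite subsets `t i ⊆ T i` of size `c i + 1`, `c` injective.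
  obtain ⟨c, hc⟩ := Countable.exists_injective_nat ι
  choose t ht hcard using fun i => (hT i).exists_subset_card_eq (c i + 1)
  obtain ⟨f, hf, hft⟩ := (Finset.all_card_le_biUnion_card_iff_exists_injective t).1 fun s => by
    rcases s.eq_empty_or_nonempty with rfl | hs
    · simp
    obtain ⟨i, hi, hmax⟩ := s.exists_max_image c hs
    calc s.card ≤ (Finset.range (c i + 1)).card :=
          Finset.card_le_card_of_injOn c (fun j hj => by simpa [Nat.lt_succ_iff] using hmax j hj)
            hc.injOn
      _ = (t i).card := by simp [hcard]
      _ ≤ (s.biUnion t).card := Finset.card_le_card (Finset.subset_biUnion_of_mem t hi)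
  exact ⟨f, hf, fun i => ht i (hft i)⟩

section Supports

variable {U X : Type*} [MulAction (Minj U) X]

theorem Supported.smul_eq_smul_of_eqOn [Countable U] [Infinite U] {A : Set U} (hAfin : A.Finite)
    {x : X} (hA : Supported A x) {u v : Minj U} (huv : EqOn u v A)
    (hv : FinSupported (U := U) (v • x)) : u • x = v • x := by
  -- `w` fixes `A` and moves the rest off `u⁻¹ B ∪ v⁻¹ B`, so that some `t` fixing a support `B`
  -- of `v • x` satisfies `u w = t v w`; then `u • x = u w • x = t • v w • x = t • v • x = v • x`.
  obtain ⟨B, hB⟩ := hv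
  have hbad : (A ∪ (u ⁻¹' B ∪ v ⁻¹' B))ᶜ.Infinite :=
    (hAfin.union ((B.finite_toSet.preimage u.2.injOn).union
      (B.finite_toSet.preimage v.2.injOn))).infinite_compl
  obtain ⟨w, hw, hwA, hwF, hwinf⟩ := exists_injective_eqOn_id_mapsTo_compl hbad
  have hagree : ∀ i, v (w i) ∈ (B : Set U) ∨ u (w i) ∈ (B : Set U) → v (w i) = u (w i) := by
    intro i hi
    by_cases hiA : i ∈ A
    · rw [hwA hiA]
      exact (huv hiA).symm
    · exact absurd hi.symm (hwF hiA)
  have hinf : (range (u ∘ w) ∪ B)ᶜ.Infinite := by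
    rw [compl_union, ← sdiff_eq]
    refine ((hwinf.image u.2.injOn).mono ?_).sdiff B.finite_toSet
    rintro _ ⟨i, hi, rfl⟩ ⟨j, hj⟩
    exact hi ⟨j, u.2 hj⟩
  obtain ⟨t, ht, htB, htw⟩ :=
    exists_injective_eqOn_id_comp_eq (v.2.comp hw) (u.2.comp hw) hagree hinf
  let wM : Minj U := ⟨w, hw⟩
  let tM : Minj U := ⟨t, ht⟩
  have hwx : wM • x = x := hA wM hwA
  have hfactor : u * wM = tM * (v * wM) := DFunLike.ext _ _ fun i => (congrFun htw i).symm
  calc u • x = (u * wM) • x := by rw [mul_smul, hwx]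
    _ = tM • (v • x) := by rw [hfactor, mul_smul, mul_smul, hwx]
    _ = v • x := hB tM htB

theorem Supported.smul_image [Countable U] [Infinite U] {A : Set U} (hAfin : A.Finite) {x : X}
    (hA : Supported A x) {u : Minj U} (hux : FinSupported (U := U) (u • x)) :
    Supported (u '' A) (u • x) := fun q hq => by
  rw [← mul_smul]
  exact hA.smul_eq_smul_of_eqOn hAfin (fun a ha => hq (u a) (mem_image_of_mem u ha)) hux

theorem supp_subset_of_supported {A : Set U} (hAfin : A.Finite) {x : X} (hA : Supported A x) :
    supp (U := U) x ⊆ A := fun i hi => by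
  simpa using hi hAfin.toFinset (by simpa using hA)

theorem supp_smul_subset_range [Countable U] [Infinite U] {x : X} (hx : FinSupported (U := U) x)
    {u : Minj U} (hux : FinSupported (U := U) (u • x)) : supp (U := U) (u • x) ⊆ range u := by
  obtain ⟨A, hA⟩ := hx
  exact (supp_subset_of_supported (A.finite_toSet.image u)
    (hA.smul_image A.finite_toSet hux)).trans (image_subset_range u A)

end Supports

section Equivariant

open MulAction

variable {G : Type*} [Group G]

lemma smul_eq_smul_of_stabilizer_le {V W : Type*} [MulAction G V] [MulAction G W] {x : V} {y : W}
    (hxy : stabilizer G x ≤ stabilizer G y) {g g' : G} (h : g • x = g' • x) : g • y = g' • y := by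
  have hx : g⁻¹ * g' ∈ stabilizer G x := by
    rw [mem_stabilizer_iff, mul_smul, ← h, inv_smul_smul]
  have hy := mem_stabilizer_iff.1 (hxy hx)
  rwa [mul_smul, inv_smul_eq_iff, eq_comm] at hy

lemma exists_injective_mulActionHom_of_orbit_reps {V W : Type*} [MulAction G V] [MulAction G W]
    (P : orbitRel.Quotient G V → W) (hstab : ∀ ω, stabilizer G (P ω) = stabilizer G ω.out)
    (hP : Injective fun ω => (⟦P ω⟧ : orbitRel.Quotient G W)) :
    ∃ φ : V →[G] W, Injective φ := by
  have hrep : ∀ v : V, ∃ g : G, g • (⟦v⟧ : orbitRel.Quotient G V).out = v := fun v =>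
    mem_orbit_iff.1 <| orbitRel_apply.1 <|
      (orbitRel G V).symm (Quotient.mk_out (s := orbitRel G V) v)
  choose γ hγ using hrep
  refine ⟨{ toFun := fun v => γ v • P ⟦v⟧, map_smul' := fun g v => ?_ }, fun v v' h => ?_⟩
  · have hgv := hγ (g • v)
    rw [orbitRel.Quotient.quotient_smul_eq] at hgv
    change γ (g • v) • P ⟦g • v⟧ = g • γ v • P ⟦v⟧
    rw [orbitRel.Quotient.quotient_smul_eq, ← mul_smul]
    refine smul_eq_smul_of_stabilizer_le (hstab _).ge ?_
    rw [hgv, mul_smul, hγ]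
  · change γ v • P ⟦v⟧ = γ v' • P ⟦v'⟧ at h
    have hq : (⟦v⟧ : orbitRel.Quotient G V) = ⟦v'⟧ := hP <| by
      simpa only [orbitRel.Quotient.quotient_smul_eq] using
        congrArg (fun w => (⟦w⟧ : orbitRel.Quotient G W)) h
    rw [hq] at h
    rw [← hγ v, ← hγ v', hq]
    exact smul_eq_smul_of_stabilizer_le (hstab _).le h

theorem IsUniversalGSet.exists_injective_mulActionHom [Finite G] {U : Type*} [MulAction G U]
    (hU : IsUniversalGSet G U) (V : Type*) [MulAction G V] [Countable V] :
    ∃ φ : V →[G] U, Injective φ := by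
  let T : orbitRel.Quotient G V → Set (orbitRel.Quotient G U) := fun ω =>
    (fun u => ⟦u⟧) '' {u | stabilizer G u = stabilizer G ω.out}
  have hT : ∀ ω, (T ω).Infinite := fun ω hfin =>
    hU.2 _ <| Set.Finite.of_finite_fibers _ hfin fun _ ⟨u, _, hu⟩ =>
      (Finite.finite_mulAction_orbit u).subset fun a ⟨_, ha⟩ =>
        orbitRel_apply.1 (Quotient.exact (ha.trans hu.symm))
  obtain ⟨f, hf, hfT⟩ := exists_injective_forall_mem_of_forall_infinite hT
  choose P hP hPf using hfT
  exact exists_injective_mulActionHom_of_orbit_reps P hP (by simpa only [hPf] using hf)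

end Equivariant

namespace MCat

variable {U C : Type*} [Category C] [MulAction (Minj U) C] (hC : MCat U C)

lemma eqToHom_comp_ι_hom (u : Minj U) {a b : C} (h : a = b) :
    eqToHom h ≫ (hC.ι u b).hom = (hC.ι u a).hom ≫ eqToHom (congrArg (u • ·) h) := by
  subst h
  simp

lemma ι_hom_comp_ι_hom_comp_eqToHom {u v u' v' : Minj U} (h : v * u = v' * u') (a : C) {b : C}
    (h₁ : v • u • a = b) (h₂ : v' • u' • a = b) :
    (hC.ι u a).hom ≫ (hC.ι v (u • a)).hom ≫ eqToHom h₁ =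
      (hC.ι u' a).hom ≫ (hC.ι v' (u' • a)).hom ≫ eqToHom h₂ := by
  have key : ∀ p (hp : p = v' * u') (e : p • a = b),
      (hC.ι p a).hom ≫ eqToHom e = (hC.ι (v' * u') a).hom ≫ eqToHom (hp ▸ e) := by
    rintro _ rfl _
    rfl
  simp only [← Category.assoc, hC.ι_mul]
  simp only [Category.assoc, eqToHom_trans]
  exact key _ h _

end MCat

namespace FixedTuple

variable {G S U C : Type*} [Group G] [MulAction G S] [MulAction G U] [Category C]
  [MulAction (Minj U) C] {hC : MCat U C}

def isoMk {x y : FixedTuple G S U C hC} (e : ∀ s, x.X s ≅ y.X s)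
    (he : ∀ g s, (e (g⁻¹ • s)).hom ≫ trTuple hC y g s = trTuple hC x g s ≫ (e s).hom) :
    x ≅ y where
  hom := ⟨fun s => (e s).hom, he⟩
  inv := ⟨fun s => (e s).inv, fun g s => by
    rw [Iso.inv_comp_eq, ← Category.assoc, he, Category.assoc, Iso.hom_inv_id, Category.comp_id]⟩
  hom_inv_id := Subtype.ext (funext fun s => (e s).hom_inv_id)
  inv_hom_id := Subtype.ext (funext fun s => (e s).inv_hom_id)

variable (x : FixedTuple G S U C hC) (us : S → Minj U)
  (hus : ∀ (g : G) (s : S), lG g * us (g⁻¹ • s) = us s * lG g)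

def twist : FixedTuple G S U C hC where
  X s := us s • x.X s
  fixed g s := by rw [← mul_smul, hus, mul_smul, x.fixed]

lemma ι_hom_comp_trTuple_twist (g : G) (s : S) :
    (hC.ι (us (g⁻¹ • s)) (x.X (g⁻¹ • s))).hom ≫ trTuple hC (x.twist us hus) g s =
      trTuple hC x g s ≫ (hC.ι (us s) (x.X s)).hom := by
  rw [trTuple, trTuple, Category.assoc, hC.eqToHom_comp_ι_hom]
  exact hC.ι_hom_comp_ι_hom_comp_eqToHom (hus g s) _ _ _

def isoTwist : x ≅ x.twist us hus :=
  isoMk (fun s => hC.ι (us s) (x.X s)) (x.ι_hom_comp_trTuple_twist us hus)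

end FixedTuple

/-- For a finite group `G`, a finite `G`-set `S`, a countably infinite universal `G`-set `U`
and a tame `M(U)`-category `C`, the inclusion `C^{⊠S} → C^S` restricts to an equivalence
`(C^{⊠S})^G → (C^S)^G` of `G`-fixed categories. -/
theorem stmt1 (G : Type*) [Group G] [Finite G] (S : Type*) [Finite S] [MulAction G S]
    (U : Type*) [MulAction G U] (hU : IsUniversalGSet G U)
    (C : Type*) [Category C] [MulAction (Minj U) C]
    (hC : MCat U C) (htame : ∀ x : C, FinSupported (U := U) x) :
    (ObjectProperty.ι (PairwiseDisjTuple (G := G) (S := S) hC)).IsEquivalence := by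
  have : Countable U := hU.1
  have : Infinite U := infinite_univ_iff.1 ((hU.2 ⊤).mono (subset_univ _))
  obtain ⟨φ, hφ⟩ := hU.exists_injective_mulActionHom (U × S)
  let us : S → Minj U := fun s => ⟨fun i => φ (i, s), fun i j h => congrArg Prod.fst (hφ h)⟩
  have hus : ∀ (g : G) (s : S), lG g * us (g⁻¹ • s) = us s * lG g := fun g s =>
    DFunLike.ext _ _ fun i => by
      change g • φ (i, g⁻¹ • s) = φ (g • i, s)
      rw [← map_smul, Prod.smul_mk, smul_inv_smul]
  refine { essSurj := ⟨fun x =>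
    ⟨⟨x.twist us hus, fun s t hst => ?_⟩, ⟨(x.isoTwist us hus).symm⟩⟩⟩ }
  refine Disjoint.mono (supp_smul_subset_range (htame _) (htame _))
    (supp_smul_subset_range (htame _) (htame _)) ?_
  exact disjoint_range_iff.2 fun i j h => hst (congrArg Prod.snd (hφ h))
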